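/- arXiv:1104.2369 — 2 statements merged into one kernel-verified Lean document; each statement's English description precedes it below -/
import Mathlib

section
/- Let A be an associative unital algebra over the complex numbers ℂ, let V be a simple A-module whose underlying ℂ-vector space has countable dimension, and let z be an element of the center of A. Then z acts on V as a complex scalar: there exists λ ∈ ℂ such that z·v = λ·v for all v ∈ V. -/
/-!
By Schur's lemma `Module.End A V` is a division algebra over `ℂ`; evaluation at a nonzero vector
embeds it into `V`, so it has countable dimension. Its center is then a field extension of `ℂ` of
countable dimension, hence algebraic: for a transcendental `t` the elements `(t - a)⁻¹`, `a ∈ ℂ`,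
would be uncountably many linearly independent vectors. As `ℂ` is algebraically closed the center
is `ℂ` itself, and it contains the action of the central element `z`.
-/

open Cardinal

universe u v

theorem Algebra.IsAlgebraic.of_lift_rank_lt {K : Type u} {E : Type v} [Field K] [Field E]
    [Algebra K E] (h : lift.{u} (Module.rank K E) < lift.{v} #K) : Algebra.IsAlgebraic K E :=
  ⟨fun x ↦ by_contra fun hx ↦
    h.not_ge (Transcendental.linearIndependent_sub_inv (x := x) hx).cardinal_lift_le_rank⟩

namespace Subalgebra

variable {K : Type u} {D : Type v} [Field K] [DivisionRing D] [Algebra K D]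

instance : Field (center K D) := inferInstanceAs (Field (Subring.center D))

theorem center_eq_bot_of_lift_rank_lt [IsAlgClosed K]
    (h : lift.{u} (Module.rank K D) < lift.{v} #K) : center K D = ⊥ := by
  have hcenter : lift.{u} (Module.rank K (center K D)) < lift.{v} #K :=
    (lift_le.2 (Submodule.rank_le (toSubmodule (center K D)))).trans_lt h
  -- the `Field` instance is transported, so instance search does not see the ring structures agree
  have : Algebra.IsIntegral K (center K D) :=
    Algebra.isAlgebraic_iff_isIntegral.mp (Algebra.IsAlgebraic.of_lift_rank_lt hcenter)
  refine eq_bot_iff.2 fun x hx ↦ Algebra.mem_bot.2 ?_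
  obtain ⟨c, hc⟩ :=
    (IsAlgClosed.algebraMap_bijective_of_isIntegral (k := K)).2 (⟨x, hx⟩ : center K D)
  exact ⟨c, congr_arg Subtype.val hc⟩

end Subalgebra

section SimpleModule

variable {K R M : Type*} [CommSemiring K] [Ring R] [Algebra K R] [AddCommGroup M] [Module K M]
  [Module R M] [IsScalarTower K R M]

theorem Module.End.rank_le_of_isSimpleModule [IsSimpleModule R M] :
    Module.rank K (Module.End R M) ≤ Module.rank K M := by
  have := IsSimpleModule.nontrivial R M
  obtain ⟨v, hv⟩ := exists_ne (0 : M)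
  refine (LinearMap.applyₗ' (R := R) (M₂ := M) K v).rank_le_of_injective fun f g hfg ↦ ?_
  by_contra hne
  exact hv <| LinearMap.injective_of_ne_zero (sub_ne_zero.2 hne) <| by simpa [sub_eq_zero] using hfg

theorem Module.End.smulLeft_mem_center {z : R} (hz : z ∈ Set.center R) :
    Module.End.smulLeft (M := M) z hz ∈ Subalgebra.center K (Module.End R M) :=
  Subalgebra.mem_center_iff.2 fun f ↦ LinearMap.ext fun v ↦ by simp

end SimpleModule

/-- A central element of `A` acts as a complex scalar on a simple `A`-module of
countable dimension over `ℂ`. -/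
theorem central_element_acts_as_scalar (A : Type*) [Ring A] [Algebra ℂ A]
    (V : Type*) [AddCommGroup V] [Module ℂ V] [Module A V] [IsScalarTower ℂ A V]
    [IsSimpleModule A V] (hV : Module.rank ℂ V ≤ Cardinal.aleph0)
    (z : A) (hz : z ∈ Subring.center A) :
    ∃ c : ℂ, ∀ v : V, z • v = c • v := by
  classical
  have hrank : lift (Module.rank ℂ (Module.End A V)) < lift #ℂ :=
    calc lift (Module.rank ℂ (Module.End A V))
      _ ≤ lift (Module.rank ℂ V) := lift_le.2 Module.End.rank_le_of_isSimpleModule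
      _ ≤ ℵ₀ := by simpa using hV
      _ < lift #ℂ := by simpa using aleph0_lt_continuum
  have hzV := Module.End.smulLeft_mem_center (K := ℂ) (M := V) hz
  rw [Subalgebra.center_eq_bot_of_lift_rank_lt hrank, Algebra.mem_bot] at hzV
  obtain ⟨c, hc⟩ := hzV
  exact ⟨c, fun v ↦ by rw [← Module.End.smulLeft_apply z hz, ← hc, Module.algebraMap_end_apply]⟩
end

section
/- Let D be a division ring that is an associative unital algebra over the complex numbers ℂ, and suppose the underlying ℂ-vector space of D has countable dimension. Then the structure map ℂ → D is surjective; that is, D = ℂ. -/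
/-!
A transcendental element `x` of a division algebra over a field `F` makes the family
`(x - a)⁻¹`, `a ∈ F`, linearly independent, so `D` has dimension at least `#F`. For `F = ℂ`
this is the continuum, so a division algebra of countable dimension over `ℂ` is algebraic,
hence equal to `ℂ` because `ℂ` is algebraically closed. The linear independence is classical
for fields; in a division ring one works inside the double centralizer of `x`, which is a subfield.
-/

open Cardinal

universe u v

theorem Subalgebra.isField_centralizer_centralizer {R D : Type*} [CommSemiring R]
    [DivisionRing D] [Algebra R D] {s : Set D} (hs : ∀ a ∈ s, ∀ b ∈ s, a * b = b * a) :
    IsField (centralizer R s.centralizer) where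
  exists_pair_ne := exists_pair_ne _
  mul_comm a b := Subtype.ext <| Set.centralizer_centralizer_comm_of_comm hs a a.2 b b.2
  mul_inv_cancel {a} ha := ⟨⟨a⁻¹, Set.inv_mem_centralizer₀ a.2⟩,
    Subtype.ext <| mul_inv_cancel₀ fun h ↦ ha (Subtype.ext h)⟩

theorem Transcendental.linearIndependent_sub_inv_of_divisionRing {F D : Type*} [Field F]
    [DivisionRing D] [Algebra F D] {x : D} (H : Transcendental F x) :
    LinearIndependent F fun a ↦ (x - algebraMap F D a)⁻¹ := by
  let K := Subalgebra.centralizer F (Set.centralizer {x})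
  let _ : Field K := (Subalgebra.isField_centralizer_centralizer (by simp)).toField
  let y : K := ⟨x, Set.subset_centralizer_centralizer rfl⟩
  have hy : Transcendental F y := Subalgebra.transcendental_iff_transcendental_val.2 H
  have hK := hy.linearIndependent_sub_inv.map' K.val.toLinearMap
    (LinearMap.ker_eq_bot.2 Subtype.val_injective)
  have hval : (K.val.toLinearMap ∘ fun a ↦ (y - algebraMap F K a)⁻¹) =
      fun a ↦ (x - algebraMap F D a)⁻¹ :=
    funext fun _ ↦ map_inv₀ (K.val : K →+* D) _
  rwa [hval] at hK

theorem Algebra.isAlgebraic_of_lift_rank_lt_lift_card {F : Type u} {D : Type v} [Field F]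
    [DivisionRing D] [Algebra F D]
    (h : Cardinal.lift.{u} (Module.rank F D) < Cardinal.lift.{v} #F) :
    Algebra.IsAlgebraic F D := by
  refine ⟨fun x ↦ of_not_not fun hx ↦ h.not_ge ?_⟩
  exact (Transcendental.linearIndependent_sub_inv_of_divisionRing hx).cardinal_lift_le_rank

theorem IsAlgClosed.algebraMap_surjective_of_lift_rank_lt_lift_card {F : Type u} {D : Type v}
    [Field F] [IsAlgClosed F] [DivisionRing D] [Algebra F D]
    (h : Cardinal.lift.{u} (Module.rank F D) < Cardinal.lift.{v} #F) :
    Function.Surjective (algebraMap F D) :=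
  have := Algebra.isAlgebraic_of_lift_rank_lt_lift_card h
  IsAlgClosed.algebraMap_bijective_of_isIntegral.2

/-- A division algebra over `ℂ` of countable dimension is `ℂ` itself. -/
theorem countable_dim_division_algebra_eq_complex (D : Type*) [DivisionRing D]
    [Algebra ℂ D] (hD : Module.rank ℂ D ≤ Cardinal.aleph0) :
    Function.Surjective (algebraMap ℂ D) := by
  refine IsAlgClosed.algebraMap_surjective_of_lift_rank_lt_lift_card ?_
  rw [mk_complex, lift_continuum, lift_uzero]
  exact hD.trans_lt aleph0_lt_continuum
end
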